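/- arXiv:2202.04921 — 2 statements merged into one kernel-verified Lean document; each statement's English description precedes it below -/
import Mathlib

section
/- There exists a subgraph G of the complete bipartite graph K_{8,15} such that G contains no K_{2,2} and the bipartite complement of G contains no K_{4,4} (i.e., K_{8,15} is 2-colorable to (K_{2,2}, K_{4,4})). -/
/-- `G` (an edge set of a subgraph of `K_{m,n}`) contains `K_{s,t}`:
there are an `s`-subset `A` of the `X`-side and a `t`-subset `B` of the `Y`-side
with every pair in `A × B` an edge. -/
def ContainsK (m n s t : ℕ) (G : Finset (Fin m × Fin n)) : Prop :=
  ∃ A : Finset (Fin m), ∃ B : Finset (Fin n),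
    A.card = s ∧ B.card = t ∧ ∀ x ∈ A, ∀ y ∈ B, (x, y) ∈ G

/-- The bipartite complement of a subgraph of `K_{m,n}`. -/
def bipCompl (m n : ℕ) (G : Finset (Fin m × Fin n)) : Finset (Fin m × Fin n) :=
  Finset.univ \ G

/-- The neighborhood in `Y` of a vertex `x` of the `X`-side. -/
def nbhd (m n : ℕ) (G : Finset (Fin m × Fin n)) (x : Fin m) : Finset (Fin n) :=
  Finset.univ.filter (fun y => (x, y) ∈ G)

/-- The degree of a vertex `x` of the `X`-side. -/
def degX (m n : ℕ) (G : Finset (Fin m × Fin n)) (x : Fin m) : ℕ :=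
  (nbhd m n G x).card

/-- Bitmask encoding of the neighborhoods of the 8 left vertices. -/
def myMask : Fin 8 → ℕ := ![4156, 9056, 18706, 1680, 11273, 16584, 8326, 4481]

/-- Adjacency predicate. -/
def myPred (x : Fin 8) (y : Fin 15) : Bool := (myMask x).testBit y

/-- The witness graph. -/
def myG : Finset (Fin 8 × Fin 15) := Finset.univ.filter (fun p => myPred p.1 p.2)

lemma mem_myG (x : Fin 8) (y : Fin 15) : (x, y) ∈ myG ↔ myPred x y = true := by
  simp [myG]

set_option maxRecDepth 100000 in
lemma key22 : ∀ x1 x2 : Fin 8, ∀ y1 y2 : Fin 15, x1 ≠ x2 → y1 ≠ y2 →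
    ¬(myPred x1 y1 = true ∧ myPred x1 y2 = true ∧ myPred x2 y1 = true ∧ myPred x2 y2 = true) := by
  decide

set_option maxRecDepth 100000 in
lemma key44 : ∀ A : Finset (Fin 8), A.card = 4 →
    (Finset.univ.filter (fun y : Fin 15 => ∀ x ∈ A, myPred x y = false)).card ≤ 3 := by
  decide

/-- There is a subgraph of K_{8,15} with no K_{2,2} whose bipartite complement
has no K_{4,4}. -/
theorem good_coloring_8_15 :
    ∃ G : Finset (Fin 8 × Fin 15),
      ¬ ContainsK 8 15 2 2 G ∧ ¬ ContainsK 8 15 4 4 (bipCompl 8 15 G) := by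
  refine ⟨myG, ?_, ?_⟩
  · rintro ⟨A, B, hA, hB, h⟩
    obtain ⟨x1, hx1, x2, hx2, hx⟩ := Finset.one_lt_card.mp (by omega : 1 < A.card)
    obtain ⟨y1, hy1, y2, hy2, hy⟩ := Finset.one_lt_card.mp (by omega : 1 < B.card)
    exact key22 x1 x2 y1 y2 hx hy
      ⟨(mem_myG _ _).mp (h x1 hx1 y1 hy1), (mem_myG _ _).mp (h x1 hx1 y2 hy2),
       (mem_myG _ _).mp (h x2 hx2 y1 hy1), (mem_myG _ _).mp (h x2 hx2 y2 hy2)⟩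
  · rintro ⟨A, B, hA, hB, h⟩
    have hsub : B ⊆ Finset.univ.filter (fun y : Fin 15 => ∀ x ∈ A, myPred x y = false) := by
      intro y hy
      simp only [Finset.mem_filter, Finset.mem_univ, true_and]
      intro x hx
      have := h x hx y hy
      simp only [bipCompl, Finset.mem_sdiff, Finset.mem_univ, true_and, mem_myG] at this
      simpa using this
    have := Finset.card_le_card hsub
    have h3 := key44 A hA
    omega
end

section
/- Let G be a subgraph of the complete bipartite graph K_{8,16} with parts X of size 8 and Y of size 16 such that G contains no K_{2,2}, G has exactly 38 edges, and every vertex of X has degree at least 4 in G. If there exist two vertices x, x' of X, each of degree exactly 4, whose neighborhoods in Y intersect in exactly one vertex, then the bipartite complement of G contains K_{4,4}. -/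
/-! Let `S` be the nine vertices of `Y` outside `N(x) ∪ N(x')` and `U` the six vertices of `X`
other than `x, x'`. It suffices to find `u ≠ v` in `U` missing four common points of `S`: then
`{x, x', u, v}` and those four points span a `K_{4,4}` of the complement. Otherwise every pair
`u ≠ v` covers at least six points of `S`, while sharing at most one (`K_{2,2}`-freeness). Double
counting incidences with `S`, together with the convexity bound `C(e, 2) ≥ 2e - 3`, forces equality
everywhere: `|N(u) ∩ S| + |N(v) ∩ S| = 7` for all pairs, which is impossible for three vertices
by parity. -/

open Finset

@[simp]
lemma mem_nbhd {m n : ℕ} {G : Finset (Fin m × Fin n)} {x : Fin m} {y : Fin n} :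
    y ∈ nbhd m n G x ↔ (x, y) ∈ G := by
  simp [nbhd]

lemma card_nbhd_inter_le_one {m n : ℕ} {G : Finset (Fin m × Fin n)}
    (hfree : ¬ ContainsK m n 2 2 G) {u v : Fin m} (huv : u ≠ v) :
    #(nbhd m n G u ∩ nbhd m n G v) ≤ 1 := by
  by_contra! h
  obtain ⟨B, hB, hB2⟩ := exists_subset_card_eq (show 2 ≤ #(nbhd m n G u ∩ nbhd m n G v) from h)
  refine hfree ⟨{u, v}, B, card_pair huv, hB2, fun w hw y hy => ?_⟩
  have hy' := mem_inter.mp (hB hy)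
  rcases mem_insert.mp hw with rfl | hw
  · exact mem_nbhd.mp hy'.1
  rw [mem_singleton.mp hw]
  exact mem_nbhd.mp hy'.2

lemma containsK_bipCompl {m n s t : ℕ} {G : Finset (Fin m × Fin n)} {A : Finset (Fin m)}
    {B : Finset (Fin n)} (hA : #A = s) (hB : #B = t)
    (hAB : ∀ x ∈ A, Disjoint (nbhd m n G x) B) :
    ContainsK m n s t (bipCompl m n G) :=
  ⟨A, B, hA, hB, fun x hx y hy => by
    simpa [bipCompl] using disjoint_right.mp (hAB x hx) hy⟩

lemma sum_offDiag_add_two_nsmul_sum {ι M : Type*} [DecidableEq ι] [AddCommMonoid M]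
    (s : Finset ι) (f : ι → M) :
    ∑ p ∈ s.offDiag, (f p.1 + f p.2) + 2 • ∑ a ∈ s, f a = (2 * #s) • ∑ a ∈ s, f a := by
  have hdiag : ∑ p ∈ s.diag, (f p.1 + f p.2) = 2 • ∑ a ∈ s, f a := by
    simp [diag, two_nsmul, sum_add_distrib]
  rw [← hdiag, add_comm, ← sum_union (disjoint_diag_offDiag s), diag_union_offDiag, sum_product]
  simp [sum_add_distrib, sum_const, ← sum_nsmul, two_mul, add_nsmul, add_comm]

lemma exists_mem_offDiag_add_ne_of_odd {ι : Type*} {U : Finset ι} (hU : 2 < #U) (a : ι → ℕ)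
    {k : ℕ} (hk : Odd k) : ∃ p ∈ U.offDiag, a p.1 + a p.2 ≠ k := by
  obtain ⟨u, hu, v, hv, w, hw, huv, huw, hvw⟩ := two_lt_card.mp hU
  by_contra! h
  have huv' : a u + a v = k := h (u, v) (mem_offDiag.mpr ⟨hu, hv, huv⟩)
  have huw' : a u + a w = k := h (u, w) (mem_offDiag.mpr ⟨hu, hw, huw⟩)
  have hvw' : a v + a w = k := h (v, w) (mem_offDiag.mpr ⟨hv, hw, hvw⟩)
  obtain ⟨j, rfl⟩ := hk
  omega

section DoubleCounting

variable {α ι : Type*} [DecidableEq α] {S : Finset α} {U : Finset ι}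
  {A : ι → Finset α}

lemma sum_card_eq_sum_card_filter_mem (hA : ∀ u ∈ U, A u ⊆ S) :
    ∑ u ∈ U, #(A u) = ∑ y ∈ S, #{u ∈ U | y ∈ A u} := by
  refine (sum_congr rfl fun u hu => ?_).trans
    (sum_card_bipartiteAbove_eq_sum_card_bipartiteBelow (fun u y => y ∈ A u))
  rw [bipartiteAbove, filter_mem_eq_inter, inter_eq_right.mpr (hA u hu)]

lemma sum_offDiag_card_inter_eq (hA : ∀ u ∈ U, A u ⊆ S) :
    ∑ p ∈ U.offDiag, #(A p.1 ∩ A p.2) = ∑ y ∈ S, #{u ∈ U | y ∈ A u}.offDiag := by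
  refine ((sum_congr rfl fun p hp => ?_).trans
    (sum_card_bipartiteAbove_eq_sum_card_bipartiteBelow (fun p y => y ∈ A p.1 ∩ A p.2))).trans
    (sum_congr rfl fun y _ => congrArg card ?_)
  · obtain ⟨hu, -, -⟩ := mem_offDiag.mp hp
    rw [bipartiteAbove, filter_mem_eq_inter,
      inter_eq_right.mpr (inter_subset_left.trans (hA _ hu))]
  · ext p
    simp only [bipartiteBelow, mem_filter, mem_offDiag, mem_inter]
    tauto

lemma four_mul_sum_card_le (hA : ∀ u ∈ U, A u ⊆ S) :
    4 * ∑ u ∈ U, #(A u) ≤ ∑ p ∈ U.offDiag, #(A p.1 ∩ A p.2) + 6 * #S := by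
  rw [sum_card_eq_sum_card_filter_mem hA, sum_offDiag_card_inter_eq hA, mul_sum,
    card_eq_sum_ones S, mul_sum, ← sum_add_distrib]
  refine sum_le_sum fun y _ => ?_
  rw [offDiag_card]
  generalize #{u ∈ U | y ∈ A u} = e
  zify [Nat.le_mul_self e]
  -- `(e - 2) * (e - 3) ≥ 0` for every integer `e`
  rcases le_or_gt e 2 with h | h <;> nlinarith

theorem exists_ne_four_le_card_sdiff_union [DecidableEq ι] (hS : #S = 9) (hU : #U = 6)
    (hA : ∀ u ∈ U, A u ⊆ S) (hinter : ∀ u ∈ U, ∀ v ∈ U, u ≠ v → #(A u ∩ A v) ≤ 1) :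
    ∃ u ∈ U, ∃ v ∈ U, u ≠ v ∧ 4 ≤ #(S \ (A u ∪ A v)) := by
  by_contra! hsmall
  have hpair : ∀ p ∈ U.offDiag, 6 + #(A p.1 ∩ A p.2) ≤ #(A p.1) + #(A p.2) := by
    intro p hp
    obtain ⟨hu, hv, huv⟩ := mem_offDiag.mp hp
    have := card_sdiff_add_card_eq_card (union_subset (hA _ hu) (hA _ hv))
    have := card_union_add_card_inter (A p.1) (A p.2)
    have := hsmall _ hu _ hv huv
    omega
  have hone : ∀ p ∈ U.offDiag, #(A p.1 ∩ A p.2) ≤ 1 := fun p hp => by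
    obtain ⟨hu, hv, huv⟩ := mem_offDiag.mp hp
    exact hinter _ hu _ hv huv
  have hcardOff : #U.offDiag = 30 := by rw [offDiag_card, hU]
  set T := ∑ u ∈ U, #(A u)
  set Q := ∑ p ∈ U.offDiag, #(A p.1 ∩ A p.2)
  have hQ : Q ≤ 30 := by simpa [hcardOff] using sum_le_card_nsmul _ _ 1 hone
  have hconvex : 4 * T ≤ Q + 54 := by simpa [hS] using four_mul_sum_card_le hA
  have hpairs : ∑ p ∈ U.offDiag, (#(A p.1) + #(A p.2)) = 10 * T := by
    have := sum_offDiag_add_two_nsmul_sum U (fun u => #(A u))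
    simp only [hU, smul_eq_mul] at this
    omega
  have hlow : 180 + Q ≤ 10 * T := by
    calc 180 + Q = ∑ p ∈ U.offDiag, (6 + #(A p.1 ∩ A p.2)) := by
          simp [sum_add_distrib, hcardOff, Q]
      _ ≤ _ := sum_le_sum hpair
      _ = 10 * T := hpairs
  -- Now `Q = 30` and `T = 21`, so the termwise bounds `hone` and `hpair` are equalities.
  have htight : ∀ p ∈ U.offDiag, #(A p.1) + #(A p.2) = 7 := by
    have h1 := (sum_eq_sum_iff_of_le hone).mp (by simp [hcardOff]; omega)
    have h2 := (sum_eq_sum_iff_of_le hpair).mp (by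
      rw [hpairs, sum_add_distrib, sum_const, hcardOff, smul_eq_mul]
      omega)
    intro p hp
    have := h1 p hp
    have := h2 p hp
    omega
  obtain ⟨p, hp, hne⟩ :=
    exists_mem_offDiag_add_ne_of_odd (show 2 < #U by omega) (fun u => #(A u)) (by decide : Odd 7)
  exact hne (htight p hp)

end DoubleCounting

theorem two_deg4_common_nbr_general (G : Finset (Fin 8 × Fin 16))
    (hfree : ¬ ContainsK 8 16 2 2 G)
    (x x' : Fin 8) (hne : x ≠ x')
    (hx : degX 8 16 G x = 4) (hx' : degX 8 16 G x' = 4)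
    (hint : (nbhd 8 16 G x ∩ nbhd 8 16 G x').card = 1) :
    ContainsK 8 16 4 4 (bipCompl 8 16 G) := by
  set N := nbhd 8 16 G
  set S := (N x ∪ N x')ᶜ
  have hS : #S = 9 := by
    have := card_union_add_card_inter (N x) (N x')
    have hx : #(N x) = 4 := hx
    have hx' : #(N x') = 4 := hx'
    rw [card_compl, Fintype.card_fin]
    omega
  have hU : #({x, x'}ᶜ : Finset (Fin 8)) = 6 := by
    rw [card_compl, card_pair hne]
    rfl
  obtain ⟨u, hu, v, hv, huv, h4⟩ := exists_ne_four_le_card_sdiff_union hS hU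
    (A := fun w => N w ∩ S) (fun _ _ => inter_subset_right)
    (fun u _ v _ huv => (card_le_card (by gcongr <;> exact inter_subset_left)).trans
      (card_nbhd_inter_le_one hfree huv))
  obtain ⟨B, hB, hB4⟩ := exists_subset_card_eq h4
  refine containsK_bipCompl (A := {x, x', u, v}) ?_ hB4 fun w hw =>
    disjoint_right.mpr fun y hy => ?_
  · simp only [mem_compl, mem_insert, mem_singleton, not_or] at hu hv
    rw [card_insert_of_notMem, card_insert_of_notMem, card_pair huv] <;> simp [*, Ne.symm]
  · have := hB hy
    simp only [mem_insert, mem_singleton] at hw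
    simp only [mem_sdiff, mem_union, mem_inter, S, mem_compl] at this
    rcases hw with rfl | rfl | rfl | rfl <;> tauto

/-- If G is a K_{2,2}-free subgraph of K_{8,16} with exactly 38 edges, minimum
X-degree at least 4, and there are two vertices of X of degree exactly 4 whose
neighborhoods meet in exactly one vertex, then the complement of G contains K_{4,4}. -/
theorem two_deg4_common_nbr (G : Finset (Fin 8 × Fin 16))
    (hfree : ¬ ContainsK 8 16 2 2 G)
    (hcard : G.card = 38)
    (hmin : ∀ x : Fin 8, 4 ≤ degX 8 16 G x)
    (x x' : Fin 8) (hne : x ≠ x')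
    (hx : degX 8 16 G x = 4) (hx' : degX 8 16 G x' = 4)
    (hint : (nbhd 8 16 G x ∩ nbhd 8 16 G x').card = 1) :
    ContainsK 8 16 4 4 (bipCompl 8 16 G) :=
  two_deg4_common_nbr_general G hfree x x' hne hx hx' hint
end
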